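/- Let b be a basis of a simple matroid M on ground set E such that the sets F_{ij} ∖ {i,j} for i, j ∈ b (where F_{ij} = cl({i,j})) partition E ∖ b. Then: (a) crem_b descends to a linear automorphism of ℝ^E/ℝ𝟙; (b) for every flat G of M, writing F_a = cl({b_i : b_i ∈ a}) for subsets a ⊆ b, the flat G is the disjoint union of the two flats F_{b∩G} and G ∩ F_{b∖G}; (c) in ℝ^E/ℝ𝟙 one has crem_b(v_{G ∩ F_{b∖G}}) = v_{G ∩ F_{b∖G}} and crem_b(v_{F_{b∩G}}) = v_{F_{b∖G}}. -/

import Mathlib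

open Set Function
open scoped Matroid Classical

namespace BergmanFans

variable {α β γ : Type*}

/-! ### Matroid notions -/

/-- A circuit of a matroid: a minimal dependent set. -/
def Circuit (M : Matroid α) (C : Set α) : Prop :=
  M.Dep C ∧ ∀ D, D ⊂ C → M.Indep D

/-- The rank of a subset: the largest cardinality of an independent subset. -/
noncomputable def rkSet (M : Matroid α) (X : Set α) : ℕ :=
  sSup {n | ∃ I, I ⊆ X ∧ M.Indep I ∧ I.ncard = n}

/-- The rank of a matroid. -/
noncomputable def rk (M : Matroid α) : ℕ := rkSet M M.E

/-- A matroid is loopfree if every singleton of the ground set is independent. -/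
def Loopfree (M : Matroid α) : Prop := ∀ i ∈ M.E, M.Indep {i}

/-- A matroid is simple if it has no loops and no parallel pairs. -/
def Simple (M : Matroid α) : Prop := ∀ i ∈ M.E, ∀ j ∈ M.E, M.Indep {i, j}

/-- Two elements are related if they are equal or lie on a common circuit. -/
def ConnRel (M : Matroid α) (i j : α) : Prop :=
  i = j ∨ ∃ C, Circuit M C ∧ i ∈ C ∧ j ∈ C

/-- The connected component of an element. -/
def component (M : Matroid α) (i : α) : Set α := {j ∈ M.E | ConnRel M i j}

/-- A matroid is connected if all pairs of elements of the ground set lie on common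
circuits. -/
def Connected (M : Matroid α) : Prop :=
  M.E.Nonempty ∧ ∀ i ∈ M.E, ∀ j ∈ M.E, ConnRel M i j

/-- A matroid is totally disconnected if every connected component has rank at most one. -/
def TotallyDisconnected (M : Matroid α) : Prop :=
  ∀ i ∈ M.E, rkSet M (component M i) ≤ 1

/-- Contraction of a set, defined by duality. -/
noncomputable def contract (M : Matroid α) (C : Set α) : Matroid α := (M✶ ↾ (M.E \ C))✶

/-- A matroid isomorphism along a bijection of the underlying types. -/
def IsMatroidIso (M₁ : Matroid α) (M₂ : Matroid β) (f : α ≃ β) : Prop :=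
  f '' M₁.E = M₂.E ∧ ∀ I, I ⊆ M₁.E → (M₁.Indep I ↔ M₂.Indep (f '' I))

/-- `M` is the parallel connection of `N₁` and `N₂` along `p`, described via circuits. -/
def IsParallelConnAt (M N₁ N₂ : Matroid γ) (p : γ) : Prop :=
  N₁.E ∪ N₂.E = M.E ∧ N₁.E ∩ N₂.E = {p} ∧
  ∀ C, Circuit M C ↔ (Circuit N₁ C ∨ Circuit N₂ C ∨
    ∃ C₁ C₂, Circuit N₁ C₁ ∧ Circuit N₂ C₂ ∧ p ∈ C₁ ∧ p ∈ C₂ ∧ C = (C₁ ∪ C₂) \ {p})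

/-- `M` is a non-trivial parallel connection along `p`. -/
def IsNontrivParallelConnAt (M : Matroid γ) (p : γ) : Prop :=
  ∃ N₁ N₂, IsParallelConnAt M N₁ N₂ p ∧ 2 ≤ rk N₁ ∧ 2 ≤ rk N₂

/-- `M` is a non-trivial parallel connection. -/
def IsNontrivParallelConn (M : Matroid γ) : Prop := ∃ p, IsNontrivParallelConnAt M p

/-- `M` is the parallel connection of matroids `M₁`, `M₂` on other ground types, glued
along `p₁ ∈ E(M₁)` and `p₂ ∈ E(M₂)` via the injections `g₁`, `g₂`. -/
def IsParallelConnEmb (M : Matroid γ) (M₁ : Matroid α) (M₂ : Matroid β)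
    (g₁ : α → γ) (g₂ : β → γ) (p₁ : α) (p₂ : β) : Prop :=
  Injective g₁ ∧ Injective g₂ ∧ range g₁ ∪ range g₂ = univ ∧
    range g₁ ∩ range g₂ = {g₁ p₁} ∧ g₁ p₁ = g₂ p₂ ∧
    ∀ C, Circuit M C ↔
      ((∃ C₁, Circuit M₁ C₁ ∧ C = g₁ '' C₁) ∨ (∃ C₂, Circuit M₂ C₂ ∧ C = g₂ '' C₂) ∨
        (∃ C₁ C₂, Circuit M₁ C₁ ∧ Circuit M₂ C₂ ∧ p₁ ∈ C₁ ∧ p₂ ∈ C₂ ∧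
          C = (g₁ '' C₁ ∪ g₂ '' C₂) \ {g₁ p₁}))

/-! ### The ambient space `ℝ^E/ℝ𝟙` and its lattice -/

variable (α) [Fintype α]

/-- The line `ℝ𝟙 ⊆ ℝ^E`. -/
noncomputable def lineSub : Submodule ℝ (α → ℝ) := Submodule.span ℝ {fun _ => (1 : ℝ)}

/-- The ambient space `ℝ^E/ℝ𝟙`. -/
abbrev Amb := (α → ℝ) ⧸ lineSub α

/-- The quotient map `ℝ^E → ℝ^E/ℝ𝟙`. -/
noncomputable def proj : (α → ℝ) →ₗ[ℝ] Amb α := (lineSub α).mkQ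

/-- The lattice `ℤ^E/ℤ𝟙` inside `ℝ^E/ℝ𝟙`. -/
noncomputable def intLatt : Set (Amb α) :=
  proj α '' {x | ∀ i, ∃ n : ℤ, x i = (n : ℝ)}

variable {α}

/-- The indicator vector `v_S ∈ ℝ^E` of a subset `S ⊆ E`. -/
noncomputable def indic (S : Set α) : α → ℝ := S.indicator 1

/-! ### Fans and their isomorphisms -/

variable {V W : Type*} [AddCommGroup V] [Module ℝ V] [AddCommGroup W] [Module ℝ W]

/-- A linear map induced by an isomorphism of the lattices `LV`, `LW`. -/
def IsLatticeLinearIso (LV : Set V) (LW : Set W) (φ : V →ₗ[ℝ] W) : Prop :=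
  Function.Bijective φ ∧ φ '' LV = LW

/-- `φ` is an isomorphism of the fans `S₁`, `S₂` (viewed as their collections of cones)
with respect to the lattices `LV`, `LW`: it is induced by a lattice isomorphism, maps cones
to cones, and its inverse maps cones to cones. -/
def IsFanIso (LV : Set V) (LW : Set W) (φ : V →ₗ[ℝ] W)
    (S₁ : Set (Set V)) (S₂ : Set (Set W)) : Prop :=
  IsLatticeLinearIso LV LW φ ∧ (∀ σ ∈ S₁, φ '' σ ∈ S₂) ∧ ∀ τ ∈ S₂, φ ⁻¹' τ ∈ S₁

/-- The ray spanned by a vector. -/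
def rayOf (u : V) : Set V := {x | ∃ t : ℝ, 0 ≤ t ∧ x = t • u}

/-- The product of two fans. -/
def prodFan (S₁ : Set (Set V)) (S₂ : Set (Set W)) : Set (Set (V × W)) :=
  {σ | ∃ σ₁ ∈ S₁, ∃ σ₂ ∈ S₂, σ = σ₁ ×ˢ σ₂}

/-! ### Bergman fans -/

/-- The affine Bergman fan: the set of `x` such that for every circuit `C` the minimum of
the values of `x` on `C` is attained at least twice. -/
def affBergman (M : Matroid α) : Set (α → ℝ) :=
  {x | ∀ C, Circuit M C → ∃ i ∈ C, ∃ j ∈ C, i ≠ j ∧ x i = x j ∧ ∀ k ∈ C, x i ≤ x k}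

/-- The projective Bergman fan `B(M) ⊆ ℝ^E/ℝ𝟙`, as a set. -/
noncomputable def projBergman (M : Matroid α) : Set (Amb α) := proj α '' affBergman M

/-- A proper nonempty flat. -/
def ProperFlat (M : Matroid α) (F : Set α) : Prop := M.IsFlat F ∧ F.Nonempty ∧ F ≠ M.E

/-- The cone spanned by the classes of the indicator vectors of a finite collection of
subsets of the ground set. -/
noncomputable def flagCone (𝒞 : Finset (Set α)) : Set (Amb α) :=
  {x | ∃ c : Set α → ℝ, (∀ F, 0 ≤ c F) ∧ x = ∑ F ∈ 𝒞, c F • proj α (indic F)}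

/-- The fine fan structure on the Bergman fan: cones are spanned by flags of proper
nonempty flats. -/
noncomputable def fineFan (M : Matroid α) : Set (Set (Amb α)) :=
  {σ | ∃ 𝒞 : Finset (Set α), IsChain (· ⊆ ·) (𝒞 : Set (Set α)) ∧
    (∀ F ∈ 𝒞, ProperFlat M F) ∧ σ = flagCone 𝒞}

/-- The `w`-weight of a subset. -/
noncomputable def wt (w : α → ℝ) (B : Set α) : ℝ := ∑ i, B.indicator w i

/-- The set of bases of `M` of minimal `w`-weight: the face of the matroid polytope
selected by `w`. -/
noncomputable def minBases (M : Matroid α) (w : α → ℝ) : Set (Set α) :=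
  {B | M.IsBase B ∧ ∀ B', M.IsBase B' → wt w B ≤ wt w B'}

/-- The closed normal cone of the face of the matroid polytope selected by `w₀`. -/
noncomputable def normalCone (M : Matroid α) (w₀ : α → ℝ) : Set (α → ℝ) :=
  {w | minBases M w₀ ⊆ minBases M w}

/-- The coarse fan structure on the Bergman fan: the cones of the normal fan of the
matroid polytope whose support lies in the Bergman fan. -/
noncomputable def coarseFan (M : Matroid α) : Set (Set (Amb α)) :=
  {σ | ∃ w₀ : α → ℝ, normalCone M w₀ ⊆ affBergman M ∧ σ = proj α '' normalCone M w₀}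

/-! ### Cremona maps -/

/-- The image of the basis vector `v_k` under the Cremona map of the basis `b`. -/
noncomputable def cremTarget (M : Matroid α) (b : Set α) (k : α) : α → ℝ :=
  if k ∈ b then indic (M.closure (b \ {k})) else indic {k}

/-- The affine Cremona map associated to a basis `b` of `M`: it sends `v_k ↦ v_{cl(b\k)}`
for `k ∈ b` and fixes `v_k` for `k ∉ b`. -/
noncomputable def cremAff (M : Matroid α) (b : Set α) : (α → ℝ) →ₗ[ℝ] (α → ℝ) where
  toFun x := ∑ k, x k • cremTarget M b k
  map_add' x y := by
    simp [add_smul, Finset.sum_add_distrib]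
  map_smul' c x := by
    simp [smul_smul, Finset.smul_sum]

end BergmanFans

/-!
For `S ⊆ b`, membership `m ∈ cl S` is decided inside `b`: for `m ∈ b` it means `m ∈ S`, and for
`m ∈ cl {i, j} \ {i, j}` with `i, j ∈ b` it means `i, j ∈ S` (closures of subsets of an
independent set meet in the closure of the intersection, and `cl {i} = {i}` as `M` is simple).
Hence `(crem_b x)_m` is `Σ_b x - x_m` for `m ∈ b` and `Σ_b x - x_i - x_j + x_m` otherwise. So
`crem_b 𝟙 = (|b| - 1) 𝟙`, and since `1 - [m ∈ A]` and `(1 - [i ∈ A]) (1 - [j ∈ A])` are the values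
of `v_{cl (b \ A)}`, `crem_b v_{cl A} ≡ v_{cl (b \ A)}` modulo `𝟙` for all `A ⊆ b`; taking
`A = b \ {k}` shows `crem_b² ≡ id`. For a flat `G` and `m ∈ G \ b` on the line through
`i, j ∈ b`, exchange gives `i ∈ G ↔ j ∈ G`, which splits `G` into `cl (b ∩ G)` and
`G ∩ cl (b \ G)`; the latter misses `b`, where `crem_b` is the identity.
-/

namespace Submodule

variable {R V : Type*} [Ring R] [AddCommGroup V] [Module R V] {p : Submodule R V}
  {f : V →ₗ[R] V}

theorem mapQ_involutive (hf : p ≤ p.comap f) (hff : ∀ x, p.mkQ (f (f x)) = p.mkQ x) :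
    Involutive (p.mapQ p f hf) := by
  intro y
  induction y using Submodule.Quotient.induction_on with
  | H x => exact hff x

end Submodule

namespace Matroid

variable {α : Type*} {M : Matroid α} {I J F G : Set α} {e i j : α}

theorem IsFlat.inter (hF : M.IsFlat F) (hG : M.IsFlat G) : M.IsFlat (F ∩ G) := by
  rw [inter_eq_iInter]
  exact IsFlat.iInter fun t => by cases t <;> assumption

theorem Indep.mem_closure_iff_of_subset (hI : M.Indep I) (hJI : J ⊆ I) (he : e ∈ I) :
    e ∈ M.closure J ↔ e ∈ J :=
  ⟨fun h => (hI.closure_inter_eq_self_of_subset hJI).subset ⟨h, he⟩,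
    fun h => M.mem_closure_of_mem h (hJI.trans hI.subset_ground)⟩

theorem Indep.mem_closure_iff_of_mem_closure_pair (hI : M.Indep I) (hJI : J ⊆ I)
    (hi : i ∈ I) (hj : j ∈ I) (he : e ∈ M.closure {i, j}) (hei : e ∉ M.closure {i})
    (hej : e ∉ M.closure {j}) : e ∈ M.closure J ↔ i ∈ J ∧ j ∈ J := by
  refine ⟨fun heJ => ?_, fun ⟨hiJ, hjJ⟩ => M.closure_subset_closure (pair_subset hiJ hjJ) he⟩
  have hmeet : e ∈ M.closure (J ∩ {i, j}) := by
    rw [(hI.subset (union_subset hJI (pair_subset hi hj))).closure_inter_eq_inter_closure]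
    exact ⟨heJ, he⟩
  by_contra hij
  rcases not_and_or.1 hij with hiJ | hjJ
  · refine hej (M.closure_subset_closure ?_ hmeet)
    rintro x ⟨hxJ, rfl | rfl⟩
    exacts [absurd hxJ hiJ, rfl]
  · refine hei (M.closure_subset_closure ?_ hmeet)
    rintro x ⟨hxJ, rfl | rfl⟩
    exacts [rfl, absurd hxJ hjJ]

/-- Exchange inside a flat: `e ∈ cl {i, j} \ cl {i}` gives `j ∈ cl {e, i} ⊆ G`. -/
theorem IsFlat.mem_iff_mem_of_mem_closure_pair (hG : M.IsFlat G) (he : e ∈ G)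
    (heij : e ∈ M.closure {i, j}) (hei : e ∉ M.closure {i}) (hej : e ∉ M.closure {j}) :
    i ∈ G ↔ j ∈ G := by
  have hji : e ∈ M.closure {j, i} := pair_comm i j ▸ heij
  exact ⟨fun hi => hG.closure.subset
      (M.closure_subset_closure (pair_subset he hi) (closure_exchange ⟨hji, hei⟩).1),
    fun hj => hG.closure.subset
      (M.closure_subset_closure (pair_subset he hj) (closure_exchange ⟨heij, hej⟩).1)⟩

end Matroid

namespace BergmanFans

variable {α : Type*} {M : Matroid α} {b : Set α}

def CoveredByBasisLines (M : Matroid α) (b : Set α) : Prop :=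
  ∀ k, k ∉ b → ∃ i ∈ b, ∃ j ∈ b, i ≠ j ∧ k ∈ M.closure {i, j} \ {i, j}

theorem Simple.closure_singleton (hs : Simple M) {i : α} (hi : i ∈ M.E) :
    M.closure {i} = {i} := by
  refine subset_antisymm (fun x hx => ?_) (M.subset_closure _ (singleton_subset_iff.2 hi))
  have hiI : M.Indep {i} := by simpa using hs i hi i hi
  have hxE : x ∈ M.E := M.closure_subset_ground _ hx
  refine (hiI.mem_closure_iff.1 hx).resolve_left fun hdep => hdep.not_indep ?_
  exact hs x hxE i hi

theorem Simple.closure_empty (hs : Simple M) : M.closure ∅ = ∅ :=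
  eq_empty_of_forall_notMem fun x hx =>
    have hxE : x ∈ M.E := M.closure_subset_ground _ hx
    (M.empty_indep.mem_closure_iff.1 hx).elim
      (fun hdep => hdep.not_indep (by simpa using hs x hxE x hxE)) (notMem_empty x)

theorem Simple.notMem_closure_singleton (hs : Simple M) {i m : α} (hi : i ∈ M.E) (hmi : m ≠ i) :
    m ∉ M.closure {i} := by
  rwa [hs.closure_singleton hi, mem_singleton_iff]

theorem Simple.mem_closure_iff_of_mem_closure_pair (hs : Simple M) (hb : M.Indep b)
    {S : Set α} {i j m : α} (hS : S ⊆ b) (hi : i ∈ b) (hj : j ∈ b)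
    (hm : m ∈ M.closure {i, j} \ {i, j}) : m ∈ M.closure S ↔ i ∈ S ∧ j ∈ S :=
  hb.mem_closure_iff_of_mem_closure_pair hS hi hj hm.1
    (hs.notMem_closure_singleton (hb.subset_ground hi) fun h => hm.2 (.inl h))
    (hs.notMem_closure_singleton (hb.subset_ground hj) fun h => hm.2 (.inr h))

theorem disjoint_closure_inter_closure_sdiff (hs : Simple M) (hb : M.Indep b) (A : Set α) :
    Disjoint (M.closure (b ∩ A)) (M.closure (b \ A)) := by
  rw [disjoint_iff_inter_eq_empty,
    ← (hb.subset (union_subset inter_subset_left sdiff_subset)).closure_inter_eq_inter_closure,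
    (disjoint_sdiff_right.mono_left inter_subset_right).inter_eq, hs.closure_empty]

theorem disjoint_inter_closure_sdiff (hb : M.Indep b) (G : Set α) :
    Disjoint (G ∩ M.closure (b \ G)) b := by
  rw [disjoint_iff_inter_eq_empty, inter_assoc, hb.closure_inter_eq_self_of_subset sdiff_subset,
    inter_sdiff_self]

theorem closure_inter_union_inter_closure_sdiff (hs : Simple M) (hb : M.Indep b)
    (hcover : CoveredByBasisLines M b)
    {G : Set α} (hG : M.IsFlat G) : M.closure (b ∩ G) ∪ (G ∩ M.closure (b \ G)) = G := by
  refine subset_antisymm (union_subset ?_ inter_subset_left) fun k hk => ?_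
  · exact (M.closure_subset_closure inter_subset_right).trans hG.closure.subset
  by_cases hkb : k ∈ b
  · exact .inl (M.mem_closure_of_mem ⟨hkb, hk⟩ (inter_subset_left.trans hb.subset_ground))
  obtain ⟨i, hi, j, hj, -, hkij⟩ := hcover k hkb
  have hiff : i ∈ G ↔ j ∈ G := hG.mem_iff_mem_of_mem_closure_pair hk hkij.1
    (hs.notMem_closure_singleton (hb.subset_ground hi) fun h => hkij.2 (.inl h))
    (hs.notMem_closure_singleton (hb.subset_ground hj) fun h => hkij.2 (.inr h))
  by_cases hiG : i ∈ G
  · exact .inl ((hs.mem_closure_iff_of_mem_closure_pair hb inter_subset_left hi hj hkij).2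
      ⟨⟨hi, hiG⟩, hj, hiff.1 hiG⟩)
  · exact .inr ⟨hk, (hs.mem_closure_iff_of_mem_closure_pair hb sdiff_subset hi hj hkij).2
      ⟨⟨hi, hiG⟩, hj, mt hiff.2 hiG⟩⟩

theorem indic_apply (S : Set α) (m : α) : indic S m = if m ∈ S then 1 else 0 := by
  simp [indic, indicator_apply]

theorem indic_singleton (k : α) : indic {k} = Pi.single k 1 := by
  ext m
  simp [indic_apply, Pi.single_apply]

theorem proj_one : proj α 1 = 0 :=
  (Submodule.Quotient.mk_eq_zero _).2 (Submodule.mem_span_singleton_self _)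

theorem proj_add_smul_one (x : α → ℝ) (c : ℝ) : proj α (x + c • 1) = proj α x := by
  rw [map_add, map_smul, proj_one, smul_zero, add_zero]

section Cremona

variable [Fintype α]

theorem cremAff_apply (x : α → ℝ) (m : α) :
    cremAff M b x m = ∑ k, x k * cremTarget M b k m := by
  simp [cremAff]

theorem cremAff_single (k : α) : cremAff M b (Pi.single k 1) = cremTarget M b k := by
  ext m
  rw [cremAff_apply, Finset.sum_eq_single k (fun l _ hlk => by simp [hlk]) (by simp)]
  simp

theorem cremAff_indic_of_disjoint {S : Set α} (hS : Disjoint S b) :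
    cremAff M b (indic S) = indic S := by
  ext m
  have hterm : ∀ k, indic S k * cremTarget M b k m = if k = m then indic S m else 0 := by
    intro k
    rcases eq_or_ne k m with rfl | hkm
    · by_cases hk : k ∈ S <;> simp [cremTarget, hS.notMem_of_mem_left, indic_apply, hk]
    · by_cases hk : k ∈ S
      · simp [cremTarget, hS.notMem_of_mem_left hk, indic_apply, hk, hkm, hkm.symm]
      · simp [indic_apply, hk, hkm]
  simp [cremAff_apply, hterm]

theorem cremAff_apply_of_mem (hb : M.Indep b) (x : α → ℝ) {m : α} (hm : m ∈ b) :
    cremAff M b x m = wt x b - x m := by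
  have hterm : ∀ k, x k * cremTarget M b k m = b.indicator x k - if k = m then x m else 0 := by
    intro k
    by_cases hk : k ∈ b
    · have hmk : m ∈ M.closure (b \ {k}) ↔ m ≠ k := by
        rw [hb.mem_closure_iff_of_subset sdiff_subset hm]
        simp [hm]
      rcases eq_or_ne k m with rfl | hkm
      · simp [cremTarget, hk, indic_apply, hmk]
      · simp [cremTarget, hk, indic_apply, hmk, hkm, hkm.symm]
    · have hkm : k ≠ m := fun h => hk (h ▸ hm)
      simp [cremTarget, hk, indic_apply, hkm, hkm.symm]
  simp [cremAff_apply, hterm, Finset.sum_sub_distrib, wt]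

theorem cremAff_apply_of_mem_closure_pair (hs : Simple M) (hb : M.Indep b) (x : α → ℝ)
    {i j m : α} (hi : i ∈ b) (hj : j ∈ b) (hij : i ≠ j) (hm : m ∈ M.closure {i, j} \ {i, j}) :
    cremAff M b x m = wt x b - x i - x j + x m := by
  have hmb : m ∉ b := fun hmb =>
    hm.2 ((hb.mem_closure_iff_of_subset (pair_subset hi hj) hmb).1 hm.1)
  have hterm : ∀ k, x k * cremTarget M b k m = b.indicator x k - (if k = i then x i else 0)
      - (if k = j then x j else 0) + (if k = m then x m else 0) := by
    intro k
    by_cases hk : k ∈ b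
    · have hmk : m ∈ M.closure (b \ {k}) ↔ i ≠ k ∧ j ≠ k := by
        rw [hs.mem_closure_iff_of_mem_closure_pair hb sdiff_subset hi hj hm]
        simp [hi, hj]
      have hkm : k ≠ m := fun h => hmb (h ▸ hk)
      by_cases hki : k = i
      · subst hki
        simp [cremTarget, hk, indic_apply, hmk, hij, hkm]
      · by_cases hkj : k = j
        · subst hkj
          simp [cremTarget, hk, indic_apply, hmk, hki, hkm, Ne.symm hki]
        · simp [cremTarget, hk, indic_apply, hmk, hki, hkj, hkm, Ne.symm hki, Ne.symm hkj]
    · have hki : k ≠ i := fun h => hk (h ▸ hi)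
      have hkj : k ≠ j := fun h => hk (h ▸ hj)
      rcases eq_or_ne k m with rfl | hkm
      · simp [cremTarget, hk, indic_apply, hki, hkj]
      · simp [cremTarget, hk, indic_apply, hki, hkj, hkm, hkm.symm]
  simp [cremAff_apply, hterm, Finset.sum_add_distrib, Finset.sum_sub_distrib, wt]

theorem cremAff_one (hs : Simple M) (hb : M.Indep b)
    (hcover : CoveredByBasisLines M b) :
    cremAff M b 1 = (wt 1 b - 1) • 1 := by
  ext m
  by_cases hm : m ∈ b
  · simp [cremAff_apply_of_mem hb _ hm]
  · obtain ⟨i, hi, j, hj, hij, hmij⟩ := hcover m hm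
    simp only [cremAff_apply_of_mem_closure_pair hs hb _ hi hj hij hmij, Pi.one_apply,
      Pi.smul_apply, smul_eq_mul, mul_one]
    ring

theorem cremAff_indic_closure (hs : Simple M) (hb : M.Indep b)
    (hcover : CoveredByBasisLines M b)
    {A : Set α} (hA : A ⊆ b) :
    cremAff M b (indic (M.closure A)) =
      indic (M.closure (b \ A)) + (wt (indic (M.closure A)) b - 1) • 1 := by
  ext m
  simp only [Pi.add_apply, Pi.smul_apply, Pi.one_apply, smul_eq_mul, mul_one]
  by_cases hm : m ∈ b
  · rw [cremAff_apply_of_mem hb _ hm, indic_apply, indic_apply,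
      hb.mem_closure_iff_of_subset hA hm, hb.mem_closure_iff_of_subset sdiff_subset hm]
    by_cases hmA : m ∈ A <;> simp [hmA, hm]
  · obtain ⟨i, hi, j, hj, hij, hmij⟩ := hcover m hm
    rw [cremAff_apply_of_mem_closure_pair hs hb _ hi hj hij hmij]
    simp only [indic_apply, hb.mem_closure_iff_of_subset hA hi,
      hb.mem_closure_iff_of_subset hA hj, hs.mem_closure_iff_of_mem_closure_pair hb hA hi hj hmij,
      hs.mem_closure_iff_of_mem_closure_pair hb sdiff_subset hi hj hmij, mem_sdiff]
    by_cases hiA : i ∈ A <;> by_cases hjA : j ∈ A <;> simp [hiA, hjA, hi, hj]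

theorem lineSub_le_comap_cremAff (hs : Simple M) (hb : M.Indep b)
    (hcover : CoveredByBasisLines M b) :
    lineSub α ≤ (lineSub α).comap (cremAff M b) := by
  intro x hx
  obtain ⟨c, rfl⟩ := Submodule.mem_span_singleton.1 hx
  change cremAff M b (c • 1) ∈ lineSub α
  rw [map_smul, cremAff_one hs hb hcover, smul_smul]
  exact Submodule.mem_span_singleton.2 ⟨_, rfl⟩

theorem proj_cremAff_cremAff (hs : Simple M) (hb : M.Indep b)
    (hcover : CoveredByBasisLines M b)
    (x : α → ℝ) : proj α (cremAff M b (cremAff M b x)) = proj α x := by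
  suffices h : proj α ∘ₗ cremAff M b ∘ₗ cremAff M b = proj α from LinearMap.congr_fun h x
  refine (Pi.basisFun ℝ α).ext fun k => ?_
  simp only [LinearMap.comp_apply, Pi.basisFun_apply, cremAff_single]
  by_cases hk : k ∈ b
  · have hcompl : b \ (b \ {k}) = {k} := by simp [hk]
    rw [cremTarget, if_pos hk, cremAff_indic_closure hs hb hcover sdiff_subset,
      proj_add_smul_one, hcompl, hs.closure_singleton (hb.subset_ground hk), indic_singleton]
  · rw [cremTarget, if_neg hk, cremAff_indic_of_disjoint (disjoint_singleton_left.2 hk),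
      indic_singleton]

end Cremona

end BergmanFans

namespace BergmanFans

theorem cremona_involution_on_flats_general
    {α : Type*} [Fintype α] (M : Matroid α) (hs : Simple M)
    (b : Set α) (hb : M.IsBase b)
    (hcover : ∀ k, k ∉ b → ∃ i ∈ b, ∃ j ∈ b, i ≠ j ∧ k ∈ M.closure {i, j} \ {i, j}) :
    (∃ ψ : Amb α ≃ₗ[ℝ] Amb α, ∀ x, ψ (proj α x) = proj α (cremAff M b x)) ∧
    ∀ G, M.IsFlat G →
      (M.IsFlat (M.closure (b ∩ G)) ∧ M.IsFlat (G ∩ M.closure (b \ G)) ∧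
        G = M.closure (b ∩ G) ∪ (G ∩ M.closure (b \ G)) ∧
        Disjoint (M.closure (b ∩ G)) (G ∩ M.closure (b \ G))) ∧
      (proj α (cremAff M b (indic (G ∩ M.closure (b \ G)))) =
          proj α (indic (G ∩ M.closure (b \ G))) ∧
        proj α (cremAff M b (indic (M.closure (b ∩ G)))) =
          proj α (indic (M.closure (b \ G)))) := by
  have hcrem := Submodule.mapQ_involutive (lineSub_le_comap_cremAff hs hb.indep hcover)
    (proj_cremAff_cremAff hs hb.indep hcover)
  refine ⟨⟨LinearEquiv.ofInvolutive _ hcrem, fun x => rfl⟩, fun G hG => ⟨⟨M.isFlat_closure _,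
    hG.inter (M.isFlat_closure _),
    (closure_inter_union_inter_closure_sdiff hs hb.indep hcover hG).symm,
    (disjoint_closure_inter_closure_sdiff hs hb.indep G).mono_right inter_subset_right⟩, ?_, ?_⟩⟩
  · rw [cremAff_indic_of_disjoint (disjoint_inter_closure_sdiff hb.indep G)]
  · rw [cremAff_indic_closure hs hb.indep hcover inter_subset_left, sdiff_self_inter,
      proj_add_smul_one]

/-- Let `b` be a basis of a simple matroid such that the sets
`cl{i,j} \ {i,j}` for `i,j ∈ b` partition `E \ b`. Then the Cremona map descends to a
linear automorphism of `ℝ^E/ℝ𝟙`; every flat `G` is the disjoint union of the flats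
`cl(b ∩ G)` and `G ∩ cl(b \ G)`; and `crem_b` fixes `v_{G ∩ cl(b \ G)}` and sends
`v_{cl(b ∩ G)}` to `v_{cl(b \ G)}` in `ℝ^E/ℝ𝟙`. -/
theorem cremona_involution_on_flats
    {α : Type*} [Fintype α] (M : Matroid α) (hE : M.E = Set.univ) (hs : Simple M)
    (b : Set α) (hb : M.IsBase b)
    (hcover : ∀ k, k ∉ b → ∃ i ∈ b, ∃ j ∈ b, i ≠ j ∧ k ∈ M.closure {i, j} \ {i, j})
    (hdisj : ∀ i ∈ b, ∀ j ∈ b, ∀ i' ∈ b, ∀ j' ∈ b, i ≠ j → i' ≠ j' →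
      ({i, j} : Set α) ≠ {i', j'} →
      Disjoint (M.closure {i, j} \ {i, j}) (M.closure {i', j'} \ {i', j'})) :
    (∃ ψ : Amb α ≃ₗ[ℝ] Amb α, ∀ x, ψ (proj α x) = proj α (cremAff M b x)) ∧
    ∀ G, M.IsFlat G →
      (M.IsFlat (M.closure (b ∩ G)) ∧ M.IsFlat (G ∩ M.closure (b \ G)) ∧
        G = M.closure (b ∩ G) ∪ (G ∩ M.closure (b \ G)) ∧
        Disjoint (M.closure (b ∩ G)) (G ∩ M.closure (b \ G))) ∧
      (proj α (cremAff M b (indic (G ∩ M.closure (b \ G)))) =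
          proj α (indic (G ∩ M.closure (b \ G))) ∧
        proj α (cremAff M b (indic (M.closure (b ∩ G)))) =
          proj α (indic (M.closure (b \ G)))) :=
  cremona_involution_on_flats_general M hs b hb hcover

end BergmanFans
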